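/- arXiv:2202.02841 — 2 statements merged into one kernel-verified Lean document; each statement's English description precedes it below -/
import Mathlib

section
/- Let {X_N}_{N≥2} be random vectors in ℝⁿ with sup_{N≥2} E[‖X_N‖_∞^m] = B_m < ∞ for some m > 2. Let U_N be the componentwise uniform quantizer with N bins of width Δ_N = 2N^{-1+2/m} per coordinate (midpoint reconstruction on [-(N/2)Δ_N, (N/2)Δ_N], overflow components map to 0), and set Y_N = X_N - U_N(X_N). Then for every positive semidefinite V ∈ ℝ^{n×n}, tr(V E[Y_N Y_Nᵀ]) = O(N^{-2+4/m}). -/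
open MeasureTheory Matrix
open scoped ENNReal

/-- The scalar modified uniform quantizer with `N` bins of width `Δ`. -/
noncomputable def uniformQuantizer (N : ℕ) (Δ : ℝ) (x : ℝ) : ℝ :=
  if |x| > (N / 2 : ℝ) * Δ then 0
  else if x = (N / 2 : ℝ) * Δ then (N / 2 : ℝ) * Δ - Δ / 2
  else Δ * ⌊x / Δ⌋ + Δ / 2

/-- The componentwise (type II) uniform vector quantizer. -/
noncomputable def vectorQuantizer (N : ℕ) (Δ : ℝ) (x : Fin n → ℝ) : Fin n → ℝ :=
  fun i => uniformQuantizer N Δ (x i)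

/-!
Split on whether `‖X_N‖_∞ ≤ L_N := (N/2)Δ_N = N^{2/m}`. In range, every coordinate error is at
most `Δ_N/2 = N^{-1+2/m}`, so `|Y_N^i Y_N^j| ≤ N^{-2+4/m}`. On overflow, every coordinate error
is at most `‖X_N‖_∞`, and `‖X_N‖_∞² ≤ L_N^{2-m} ‖X_N‖_∞^m = N^{-2+4/m} ‖X_N‖_∞^m` because
`m > 2`. Hence `|E[Y_N^i Y_N^j]| ≤ (1 + B_m) N^{-2+4/m}`, and the trace is at most
`∑ |V_ij|` times this entry bound.
-/

lemma uniformQuantizer_of_lt_abs {N : ℕ} {Δ x : ℝ} (hx : (N / 2 : ℝ) * Δ < |x|) :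
    uniformQuantizer N Δ x = 0 :=
  if_pos hx

lemma abs_sub_uniformQuantizer_le {N : ℕ} {Δ x : ℝ} (hΔ : 0 < Δ)
    (hx : |x| ≤ (N / 2 : ℝ) * Δ) : |x - uniformQuantizer N Δ x| ≤ Δ / 2 := by
  unfold uniformQuantizer
  rw [if_neg hx.not_gt]
  split_ifs with h
  · rw [h, abs_le]
    constructor <;> linarith
  · have hfloor : Δ * ⌊x / Δ⌋ ≤ x := by
      rw [← le_div_iff₀' hΔ]; exact Int.floor_le _
    have hceil : x < (⌊x / Δ⌋ + 1) * Δ := (div_lt_iff₀ hΔ).mp (Int.lt_floor_add_one _)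
    rw [abs_le]
    constructor <;> linarith

lemma abs_sub_uniformQuantizer_le_max {N : ℕ} {Δ : ℝ} (hΔ : 0 < Δ) (x : ℝ) :
    |x - uniformQuantizer N Δ x| ≤ max (Δ / 2) |x| := by
  rcases le_or_gt |x| ((N / 2 : ℝ) * Δ) with hx | hx
  · exact (abs_sub_uniformQuantizer_le hΔ hx).trans (le_max_left _ _)
  · rw [uniformQuantizer_of_lt_abs hx, sub_zero]
    exact le_max_right _ _

lemma sq_le_rpow_two_sub_mul_rpow {L M m : ℝ} (hL : 0 < L) (hLM : L ≤ M) (hm : 2 ≤ m) :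
    M ^ 2 ≤ L ^ (2 - m) * M ^ m := by
  have hM : 0 < M := hL.trans_le hLM
  calc M ^ 2 = M ^ (2 - m) * M ^ m := by
        rw [← Real.rpow_add hM, sub_add_cancel, ← Real.rpow_natCast]; norm_num
    _ ≤ L ^ (2 - m) * M ^ m :=
        mul_le_mul_of_nonneg_right (Real.rpow_le_rpow_of_nonpos hL hLM (by linarith))
          (Real.rpow_nonneg hM.le m)

lemma abs_mul_sub_uniformQuantizer_le {N : ℕ} {Δ m M x y : ℝ} (hΔ : 0 < Δ) (hN : 1 ≤ N)
    (hm : 2 ≤ m) (hx : |x| ≤ M) (hy : |y| ≤ M) :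
    |(x - uniformQuantizer N Δ x) * (y - uniformQuantizer N Δ y)|
      ≤ (Δ / 2) ^ 2 + ((N / 2 : ℝ) * Δ) ^ (2 - m) * M ^ m := by
  set L : ℝ := (N / 2 : ℝ) * Δ
  have hΔL : Δ / 2 ≤ L := by
    have : (1 : ℝ) ≤ N := by exact_mod_cast hN
    simp only [L]; nlinarith
  have hM : 0 ≤ M := (abs_nonneg x).trans hx
  rw [abs_mul]
  rcases le_or_gt M L with hML | hLM
  · have hrange : ∀ z, |z| ≤ M → |z - uniformQuantizer N Δ z| ≤ Δ / 2 :=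
      fun z hz => abs_sub_uniformQuantizer_le hΔ (hz.trans hML)
    calc _ ≤ (Δ / 2) ^ 2 := by
          rw [sq]; exact mul_le_mul (hrange x hx) (hrange y hy) (abs_nonneg _) (by positivity)
      _ ≤ _ := le_add_of_nonneg_right (by positivity)
  · have hoverflow : ∀ z, |z| ≤ M → |z - uniformQuantizer N Δ z| ≤ M :=
      fun z hz => (abs_sub_uniformQuantizer_le_max hΔ z).trans (max_le (by linarith) hz)
    calc _ ≤ M ^ 2 := by
          rw [sq]; exact mul_le_mul (hoverflow x hx) (hoverflow y hy) (abs_nonneg _) hM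
      _ ≤ L ^ (2 - m) * M ^ m := sq_le_rpow_two_sub_mul_rpow (by linarith) hLM.le hm
      _ ≤ _ := le_add_of_nonneg_left (by positivity)

lemma rpow_neg_one_add_two_div_sq {N : ℝ} (hN : 0 < N) (m : ℝ) :
    (N ^ (-1 + 2 / m)) ^ 2 = N ^ (-2 + 4 / m) := by
  rw [← Real.rpow_natCast, ← Real.rpow_mul hN.le]
  ring_nf

lemma mul_rpow_neg_one_add_two_div_rpow {N m : ℝ} (hN : 0 < N) (hm : m ≠ 0) :
    (N * N ^ (-1 + 2 / m)) ^ (2 - m) = N ^ (-2 + 4 / m) := by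
  rw [← Real.rpow_one_add' hN.le (by simp [hm]), ← Real.rpow_mul hN.le]
  congr 1
  field_simp
  ring

lemma abs_mul_sub_uniformQuantizer_le_rpow {N : ℕ} {m M x y : ℝ} (hN : 1 ≤ N) (hm : 2 < m)
    (hx : |x| ≤ M) (hy : |y| ≤ M) :
    |(x - uniformQuantizer N (2 * (N : ℝ) ^ (-1 + 2 / m)) x) *
        (y - uniformQuantizer N (2 * (N : ℝ) ^ (-1 + 2 / m)) y)|
      ≤ (N : ℝ) ^ (-2 + 4 / m) + (N : ℝ) ^ (-2 + 4 / m) * M ^ m := by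
  have hN0 : (0 : ℝ) < N := by exact_mod_cast hN
  have hbound := abs_mul_sub_uniformQuantizer_le (Δ := 2 * (N : ℝ) ^ (-1 + 2 / m))
    (by positivity) hN hm.le hx hy
  have hL : (N / 2 : ℝ) * (2 * (N : ℝ) ^ (-1 + 2 / m)) = N * (N : ℝ) ^ (-1 + 2 / m) := by ring
  rwa [mul_div_cancel_left₀ _ two_ne_zero, rpow_neg_one_add_two_div_sq hN0, hL,
    mul_rpow_neg_one_add_two_div_rpow hN0 (by positivity)] at hbound

lemma abs_integral_le_of_abs_le_add_mul {Ω : Type*} [MeasurableSpace Ω] {μ : Measure Ω}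
    [IsProbabilityMeasure μ] {f g : Ω → ℝ} {c d B : ℝ} (hc : 0 ≤ c) (hd : 0 ≤ d) (hB : 0 ≤ B)
    (hgB : ∫⁻ ω, ENNReal.ofReal (g ω) ∂μ ≤ ENNReal.ofReal B) (hf : ∀ ω, |f ω| ≤ c + d * g ω) :
    |∫ ω, f ω ∂μ| ≤ c + d * B := by
  -- `‖∫ f‖ ≤ ∫⁻ ‖f‖` holds for every `f`, so no measurability or integrability is needed.
  refine (norm_integral_le_lintegral_norm f).trans
    (ENNReal.toReal_le_of_le_ofReal (by positivity) ?_)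
  calc ∫⁻ ω, ENNReal.ofReal ‖f ω‖ ∂μ
      ≤ ∫⁻ ω, ENNReal.ofReal c + ENNReal.ofReal d * ENNReal.ofReal (g ω) ∂μ :=
        lintegral_mono fun ω => (ENNReal.ofReal_le_ofReal (hf ω)).trans <|
          ENNReal.ofReal_add_le.trans_eq (by rw [ENNReal.ofReal_mul hd])
    _ = ENNReal.ofReal c + ENNReal.ofReal d * ∫⁻ ω, ENNReal.ofReal (g ω) ∂μ := by
        rw [lintegral_add_left measurable_const, lintegral_const, measure_univ, mul_one,
          lintegral_const_mul' _ _ ENNReal.ofReal_ne_top]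
    _ ≤ ENNReal.ofReal (c + d * B) := by
        rw [ENNReal.ofReal_add hc (by positivity), ENNReal.ofReal_mul hd]
        gcongr

lemma trace_mul_le_of_abs_le {ι : Type*} [Fintype ι] (V A : Matrix ι ι ℝ) {b : ℝ}
    (hA : ∀ i j, |A i j| ≤ b) : (V * A).trace ≤ (∑ i, ∑ j, |V i j|) * b := by
  simp only [trace, diag, mul_apply, Finset.sum_mul]
  refine Finset.sum_le_sum fun i _ => Finset.sum_le_sum fun j _ => ?_
  exact (le_abs_self _).trans ((abs_mul _ _).trans_le
    (mul_le_mul_of_nonneg_left (hA j i) (abs_nonneg _)))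

theorem vector_quantizer_high_rate_distortion_general {Ω : Type*} [MeasurableSpace Ω]
    (μ : Measure Ω) [IsProbabilityMeasure μ] (n : ℕ) [NeZero n]
    (X : ℕ → Ω → (Fin n → ℝ))
    (m : ℝ) (hm : 2 < m) (Bm : ℝ)
    (hB : ∀ N, 2 ≤ N →
      ∫⁻ ω, ENNReal.ofReal
        ((Finset.univ.sup' Finset.univ_nonempty fun i => |X N ω i|) ^ m) ∂μ
        ≤ ENNReal.ofReal Bm)
    (V : Matrix (Fin n) (Fin n) ℝ) :
    ∃ c : ℝ, 0 < c ∧ ∃ N₀ : ℕ, ∀ N, N₀ ≤ N → 2 ≤ N → Even N →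
      (V * Matrix.of (fun i j =>
          ∫ ω, (X N ω i - uniformQuantizer N (2 * (N : ℝ) ^ (-1 + 2 / m)) (X N ω i)) *
               (X N ω j - uniformQuantizer N (2 * (N : ℝ) ^ (-1 + 2 / m)) (X N ω j)) ∂μ)).trace
        ≤ c * (N : ℝ) ^ (-2 + 4 / m) := by
  set S := ∑ i, ∑ j, |V i j|
  set B := max Bm 0
  refine ⟨(S + 1) * (1 + B), by positivity, 0, fun N _ hN _ => ?_⟩
  set p : ℝ := -2 + 4 / m
  have hS : 0 ≤ S := by positivity
  have hB0 : 0 ≤ B := le_max_right _ _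
  have hNp : 0 ≤ (N : ℝ) ^ p := by positivity
  calc _ ≤ S * ((N : ℝ) ^ p + (N : ℝ) ^ p * B) := by
        refine trace_mul_le_of_abs_le _ _ fun i j => ?_
        refine abs_integral_le_of_abs_le_add_mul hNp hNp hB0
          ((hB N hN).trans (ENNReal.ofReal_le_ofReal (le_max_left _ _))) fun ω => ?_
        exact abs_mul_sub_uniformQuantizer_le_rpow (by omega) hm
          (Finset.le_sup' (fun i => |X N ω i|) (Finset.mem_univ i))
          (Finset.le_sup' (fun i => |X N ω i|) (Finset.mem_univ j))
    _ ≤ (S + 1) * (1 + B) * (N : ℝ) ^ p := by nlinarith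

/-- If `sup_{N≥2} E[‖X_N‖_∞^m] ≤ B_m < ∞` for some `m > 2`, the bin size is
`Δ_N = 2 N^{-1+2/m}`, and `Y_N = X_N - U_N(X_N)`, then for every positive
semidefinite `V`, `tr(V E[Y_N Y_Nᵀ]) = O(N^{-2+4/m})` along even `N → ∞`. -/
theorem vector_quantizer_high_rate_distortion {Ω : Type*} [MeasurableSpace Ω]
    (μ : Measure Ω) [IsProbabilityMeasure μ] (n : ℕ) [NeZero n]
    (X : ℕ → Ω → (Fin n → ℝ)) (hXm : ∀ N, Measurable (X N))
    (m : ℝ) (hm : 2 < m) (Bm : ℝ)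
    (hB : ∀ N, 2 ≤ N →
      ∫⁻ ω, ENNReal.ofReal
        ((Finset.univ.sup' Finset.univ_nonempty fun i => |X N ω i|) ^ m) ∂μ
        ≤ ENNReal.ofReal Bm)
    (V : Matrix (Fin n) (Fin n) ℝ) (hV : V.PosSemidef) :
    ∃ c : ℝ, 0 < c ∧ ∃ N₀ : ℕ, ∀ N, N₀ ≤ N → 2 ≤ N → Even N →
      (V * Matrix.of (fun i j =>
          ∫ ω, (X N ω i - uniformQuantizer N (2 * (N : ℝ) ^ (-1 + 2 / m)) (X N ω i)) *
               (X N ω j - uniformQuantizer N (2 * (N : ℝ) ^ (-1 + 2 / m)) (X N ω j)) ∂μ)).trace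
        ≤ c * (N : ℝ) ^ (-2 + 4 / m) :=
  vector_quantizer_high_rate_distortion_general μ n X m hm Bm hB V
end

section
/- Let r > 1, β > 2, ε ∈ (0, β-2), ξ > 1 satisfy r ξ^{-β} < 1, and let w be nonnegative with E[w^β] < ∞. Suppose a nonnegative-integer-valued random variable τ satisfies P(τ ≥ k+1) ≤ k E[w^β] (c Δ (hξ^k - 1 - c'k)/k)^{-β} for all k ≥ 1, with constants c, c', h as above (h ∈ (1/ξ,1], c' < hξ-1, c > 0) and parameter Δ ≥ Δ₀ > 0. Then E[r^{τ-1}] ≤ 1 + M Δ^{-β} for a constant M independent of Δ; in particular sup_{Δ ≥ Δ₀} E[r^{τ-1}] < ∞ and E[r^{τ-1}] → 1 as Δ → ∞. -/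
open MeasureTheory Filter Topology
open scoped ENNReal

/-!
Pointwise `r ^ (τ - 1) ≤ 1 + ∑_{k ≥ 1} r ^ k 𝟙{τ ≥ k + 1}`, so `E[r ^ (τ - 1)]` is at most
`1 + ∑_{k ≥ 1} r ^ k P(τ ≥ k + 1)`. Since `h ξ ^ k - 1 - c' k ≥ a ξ ^ k` for some `a > 0`, the tail
hypothesis gives `P(τ ≥ k + 1) ≤ C Δ ^ (-β) k ^ (β + 1) (ξ ^ (-β)) ^ k`, and `r ξ ^ (-β) < 1` makes
`∑ k ^ (β + 1) (r ξ ^ (-β)) ^ k` finite. Hence `E[r ^ (τ - 1)] ≤ 1 + M Δ ^ (-β)`; as also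
`r ^ (τ - 1) ≥ 1`, the moments are bounded for `Δ ≥ Δ₀` and tend to `1`.
-/

lemma summable_rpow_mul_geometric_of_lt_one (p : ℝ) {q : ℝ} (hq0 : 0 ≤ q) (hq1 : q < 1) :
    Summable fun k : ℕ => (k : ℝ) ^ p * q ^ k := by
  refine Summable.of_nonneg_of_le (fun k => by positivity) (fun k => ?_)
    (summable_pow_mul_geometric_of_norm_lt_one ⌈p⌉₊ (by rwa [Real.norm_of_nonneg hq0]))
  gcongr ?_ * _
  rcases k.eq_zero_or_pos with rfl | hk
  · rcases eq_or_ne p 0 with rfl | hp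
    · simp
    · simp [Real.zero_rpow hp]
  · rw [← Real.rpow_natCast]
    exact Real.rpow_le_rpow_of_exponent_le (by exact_mod_cast hk) (Nat.le_ceil p)

section ReturnTime

variable {Ω : Type*} [MeasurableSpace Ω] (μ : Measure Ω) [IsProbabilityMeasure μ] (τ : Ω → ℕ)

lemma one_le_lintegral_ofReal_pow {r : ℝ} (hr : 1 ≤ r) :
    1 ≤ ∫⁻ ω, ENNReal.ofReal (r ^ τ ω) ∂μ :=
  calc (1 : ℝ≥0∞) = ∫⁻ _, 1 ∂μ := by simp
    _ ≤ ∫⁻ ω, ENNReal.ofReal (r ^ τ ω) ∂μ :=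
      lintegral_mono fun ω => ENNReal.one_le_ofReal.2 (one_le_pow₀ hr)

lemma lintegral_ofReal_pow_sub_one_le (r : ℝ) :
    ∫⁻ ω, ENNReal.ofReal (r ^ (τ ω - 1)) ∂μ ≤
      1 + ∑' k : ℕ, ENNReal.ofReal (r ^ (k + 1)) * μ {ω | k + 1 + 1 ≤ τ ω} := by
  -- `τ` need not be measurable, so the tail events are replaced by measurable hulls.
  set T : ℕ → Set Ω := fun k => toMeasurable μ {ω | k + 1 + 1 ≤ τ ω}
  have hpt : ∀ ω, ENNReal.ofReal (r ^ (τ ω - 1)) ≤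
      1 + ∑' k, (T k).indicator (fun _ => ENNReal.ofReal (r ^ (k + 1))) ω := by
    intro ω
    obtain hτ | hτ := le_or_gt (τ ω) 1
    · simp [Nat.sub_eq_zero_of_le hτ]
    · obtain ⟨k, hk⟩ : ∃ k, τ ω = k + 1 + 1 := ⟨τ ω - 2, by omega⟩
      have hmem : ω ∈ T k := subset_toMeasurable μ _ hk.ge
      refine le_add_left (le_of_eq_of_le ?_ (ENNReal.le_tsum k))
      rw [Set.indicator_of_mem hmem, hk]
      rfl
  calc ∫⁻ ω, ENNReal.ofReal (r ^ (τ ω - 1)) ∂μ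
      ≤ ∫⁻ ω, 1 + ∑' k, (T k).indicator (fun _ => ENNReal.ofReal (r ^ (k + 1))) ω ∂μ :=
        lintegral_mono hpt
    _ = 1 + ∑' k : ℕ, ENNReal.ofReal (r ^ (k + 1)) * μ {ω | k + 1 + 1 ≤ τ ω} := by
      have hT : ∀ k, MeasurableSet (T k) := fun k => measurableSet_toMeasurable μ _
      rw [lintegral_add_left measurable_const,
        lintegral_tsum fun k => (measurable_const.indicator (hT k)).aemeasurable]
      simp only [lintegral_const, measure_univ, mul_one, lintegral_indicator_const (hT _), T,
        measure_toMeasurable]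

lemma lintegral_ofReal_pow_sub_one_le_of_tail {r θ p C : ℝ} (hr : 0 ≤ r) (hθ : 0 ≤ θ)
    (hrθ : r * θ < 1) (hC : 0 ≤ C)
    (htail : ∀ k : ℕ, 1 ≤ k → μ {ω | k + 1 ≤ τ ω} ≤ ENNReal.ofReal (C * ((k : ℝ) ^ p * θ ^ k))) :
    ∫⁻ ω, ENNReal.ofReal (r ^ (τ ω - 1)) ∂μ ≤
      ENNReal.ofReal (1 + C * ∑' k : ℕ, (k : ℝ) ^ p * (r * θ) ^ k) := by
  set g : ℕ → ℝ := fun k => C * ((k : ℝ) ^ p * (r * θ) ^ k)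
  have hg : ∀ k, 0 ≤ g k := fun k => by positivity
  have hterm : ∀ k : ℕ, ENNReal.ofReal (r ^ (k + 1)) * μ {ω | k + 1 + 1 ≤ τ ω} ≤
      ENNReal.ofReal (g (k + 1)) := fun k =>
    calc ENNReal.ofReal (r ^ (k + 1)) * μ {ω | k + 1 + 1 ≤ τ ω}
        ≤ ENNReal.ofReal (r ^ (k + 1)) *
            ENNReal.ofReal (C * (((k + 1 : ℕ) : ℝ) ^ p * θ ^ (k + 1))) := by
          gcongr
          exact htail (k + 1) le_add_self
      _ = ENNReal.ofReal (g (k + 1)) := by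
          rw [← ENNReal.ofReal_mul (by positivity)]
          simp only [g, mul_pow]
          ring_nf
  calc ∫⁻ ω, ENNReal.ofReal (r ^ (τ ω - 1)) ∂μ
      ≤ 1 + ∑' k : ℕ, ENNReal.ofReal (r ^ (k + 1)) * μ {ω | k + 1 + 1 ≤ τ ω} :=
        lintegral_ofReal_pow_sub_one_le μ τ r
    _ ≤ 1 + ∑' k : ℕ, ENNReal.ofReal (g k) := by
        gcongr 1 + ?_
        exact (ENNReal.tsum_le_tsum hterm).trans
          (ENNReal.tsum_comp_le_tsum_of_injective Nat.succ_injective fun k => ENNReal.ofReal (g k))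
    _ = ENNReal.ofReal (1 + C * ∑' k : ℕ, (k : ℝ) ^ p * (r * θ) ^ k) := by
        rw [← tsum_mul_left, ENNReal.ofReal_add zero_le_one (tsum_nonneg hg), ENNReal.ofReal_one,
          ENNReal.ofReal_tsum_of_nonneg hg
            ((summable_rpow_mul_geometric_of_lt_one p (by positivity) hrθ).mul_left C)]

end ReturnTime

lemma exists_pos_mul_pow_le_sub {ξ h c' : ℝ} (hξ : 1 < ξ) (hh : h ≤ 1) (hhξ : 1 < h * ξ)
    (hc' : c' < h * ξ - 1) :
    ∃ a : ℝ, 0 < a ∧ ∀ k : ℕ, 1 ≤ k → a * ξ ^ k ≤ h * ξ ^ k - 1 - c' * k := by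
  set d := max c' 0
  have hd : d < h * ξ - 1 := max_lt hc' (by linarith)
  -- `f k = h ξ^k - 1 - d k` satisfies `f (k + 1) - ξ f k = (ξ - 1)(1 + d k) - d ≥ ξ - 1 - d ≥ 0`.
  have hgrowth : ∀ k : ℕ, (h * ξ - 1 - d) * ξ ^ k ≤ h * ξ ^ (k + 1) - 1 - d * (k + 1 : ℕ) := by
    intro k
    induction k with
    | zero => simp
    | succ k ih =>
      have hdk : 0 ≤ d * (k + 1) := by positivity
      push_cast at ih ⊢
      rw [pow_succ, pow_succ]
      nlinarith
  refine ⟨(h * ξ - 1 - d) / ξ, by apply div_pos <;> linarith, fun k hk => ?_⟩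
  obtain ⟨j, rfl⟩ := Nat.exists_eq_add_of_le' hk
  have hc'd : c' * (j + 1 : ℕ) ≤ d * (j + 1 : ℕ) := by gcongr; exact le_max_left _ _
  calc (h * ξ - 1 - d) / ξ * ξ ^ (j + 1) = (h * ξ - 1 - d) * ξ ^ j := by
        field_simp; ring
    _ ≤ _ := by linarith [hgrowth j]

lemma natCast_mul_mul_rpow_neg_le {β c Δ a ξ E X : ℝ} {k : ℕ} (hk : 0 < k) (hβ : 0 ≤ β)
    (hc : 0 ≤ c) (hΔ : 0 ≤ Δ) (ha : 0 < a) (hξ : 0 < ξ) (hE : 0 ≤ E) (hX : a * ξ ^ k ≤ X) :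
    k * E * (c * Δ * X / k) ^ (-β) ≤
      E * c ^ (-β) * a ^ (-β) * Δ ^ (-β) * ((k : ℝ) ^ (β + 1) * (ξ ^ (-β)) ^ k) := by
  have hk' : (0 : ℝ) < k := by exact_mod_cast hk
  have haξ : 0 < a * ξ ^ k := by positivity
  have hX0 : 0 < X := haξ.trans_le hX
  have hXβ : X ^ (-β) ≤ a ^ (-β) * (ξ ^ (-β)) ^ k :=
    calc X ^ (-β) ≤ (a * ξ ^ k) ^ (-β) := Real.rpow_le_rpow_of_nonpos haξ hX (neg_nonpos.2 hβ)
      _ = a ^ (-β) * (ξ ^ (-β)) ^ k := by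
        rw [Real.mul_rpow ha.le (by positivity), ← Real.rpow_natCast ξ k, ← Real.rpow_mul hξ.le,
          ← Real.rpow_natCast (ξ ^ (-β)) k, ← Real.rpow_mul hξ.le, mul_comm (k : ℝ)]
  calc (k : ℝ) * E * (c * Δ * X / k) ^ (-β)
      = E * c ^ (-β) * Δ ^ (-β) * (k : ℝ) ^ (β + 1) * X ^ (-β) := by
        rw [Real.div_rpow (by positivity) hk'.le, Real.mul_rpow (by positivity) hX0.le,
          Real.mul_rpow hc hΔ, Real.rpow_neg hk'.le, div_inv_eq_mul, Real.rpow_add_one hk'.ne']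
        ring
    _ ≤ E * c ^ (-β) * Δ ^ (-β) * (k : ℝ) ^ (β + 1) * (a ^ (-β) * (ξ ^ (-β)) ^ k) := by gcongr
    _ = E * c ^ (-β) * a ^ (-β) * Δ ^ (-β) * ((k : ℝ) ^ (β + 1) * (ξ ^ (-β)) ^ k) := by ring

section OneAddRpowNeg

variable {F : ℝ → ℝ≥0∞} {Δ₀ β M : ℝ}

lemma iSup_Ici_lt_top_of_le_one_add_mul_rpow_neg (hΔ₀ : 0 < Δ₀) (hβ : 0 ≤ β) (hM : 0 ≤ M)
    (hF : ∀ Δ, Δ₀ ≤ Δ → F Δ ≤ ENNReal.ofReal (1 + M * Δ ^ (-β))) :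
    ⨆ Δ ∈ Set.Ici Δ₀, F Δ < ⊤ := by
  refine lt_of_le_of_lt (iSup₂_le fun Δ hΔ => (hF Δ hΔ).trans ?_)
    (ENNReal.ofReal_lt_top (r := 1 + M * Δ₀ ^ (-β)))
  gcongr ENNReal.ofReal (1 + M * ?_)
  exact Real.rpow_le_rpow_of_nonpos hΔ₀ hΔ (neg_nonpos.2 hβ)

lemma tendsto_one_of_le_one_add_mul_rpow_neg (hβ : 0 < β) (hF₁ : ∀ Δ, 1 ≤ F Δ)
    (hF : ∀ Δ, Δ₀ ≤ Δ → F Δ ≤ ENNReal.ofReal (1 + M * Δ ^ (-β))) :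
    Tendsto F atTop (𝓝 1) := by
  have hlim : Tendsto (fun Δ : ℝ => ENNReal.ofReal (1 + M * Δ ^ (-β))) atTop (𝓝 1) := by
    simpa using ENNReal.tendsto_ofReal
      ((tendsto_const_nhds (x := (1 : ℝ))).add ((tendsto_rpow_neg_atTop hβ).const_mul M))
  exact tendsto_of_tendsto_of_tendsto_of_le_of_le' tendsto_const_nhds hlim
    (Eventually.of_forall hF₁) ((eventually_ge_atTop Δ₀).mono hF)

end OneAddRpowNeg

theorem return_time_exponential_moment_general {Ω : Type*} [MeasurableSpace Ω]
    (μ : Measure Ω) [IsProbabilityMeasure μ]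
    (r β ξ h c c' Δ₀ : ℝ) (hr : 1 < r) (hβ : 2 < β)
    (hξ : 1 < ξ) (hrξ : r * ξ ^ (-β) < 1)
    (hh1 : 1 / ξ < h) (hh2 : h ≤ 1) (hc : 0 < c) (hc' : c' < h * ξ - 1)
    (hΔ₀ : 0 < Δ₀)
    (w : Ω → ℝ) (hwnn : ∀ ω, 0 ≤ w ω)
    (τ : ℝ → Ω → ℕ)
    (htail : ∀ Δ, Δ₀ ≤ Δ → ∀ k : ℕ, 1 ≤ k →
      μ {ω | k + 1 ≤ τ Δ ω} ≤ ENNReal.ofReal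
        ((k : ℝ) * (∫ ω, w ω ^ β ∂μ) *
          (c * Δ * (h * ξ ^ (k : ℝ) - 1 - c' * k) / k) ^ (-β))) :
    (∃ M : ℝ, 0 ≤ M ∧ ∀ Δ, Δ₀ ≤ Δ →
      ∫⁻ ω, ENNReal.ofReal (r ^ (τ Δ ω - 1)) ∂μ ≤
        ENNReal.ofReal (1 + M * Δ ^ (-β))) ∧
    (⨆ Δ ∈ Set.Ici Δ₀, ∫⁻ ω, ENNReal.ofReal (r ^ (τ Δ ω - 1)) ∂μ) < ⊤ ∧
    Tendsto (fun Δ : ℝ => ∫⁻ ω, ENNReal.ofReal (r ^ (τ Δ ω - 1)) ∂μ)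
      atTop (nhds 1) := by
  have hξ0 : 0 < ξ := one_pos.trans hξ
  have hβ0 : 0 < β := two_pos.trans hβ
  obtain ⟨a, ha, hgrowth⟩ :=
    exists_pos_mul_pow_le_sub hξ hh2 (by rwa [div_lt_iff₀ hξ0] at hh1) hc'
  set E := ∫ ω, w ω ^ β ∂μ
  have hE : 0 ≤ E := integral_nonneg fun ω => Real.rpow_nonneg (hwnn ω) β
  set S := ∑' k : ℕ, (k : ℝ) ^ (β + 1) * (r * ξ ^ (-β)) ^ k
  have hS : 0 ≤ S := tsum_nonneg fun k => by positivity
  have hM : 0 ≤ E * c ^ (-β) * a ^ (-β) * S := by positivity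
  have hbound : ∀ Δ, Δ₀ ≤ Δ → ∫⁻ ω, ENNReal.ofReal (r ^ (τ Δ ω - 1)) ∂μ ≤
      ENNReal.ofReal (1 + E * c ^ (-β) * a ^ (-β) * S * Δ ^ (-β)) := by
    intro Δ hΔ
    have hΔ0 : 0 < Δ := hΔ₀.trans_le hΔ
    convert lintegral_ofReal_pow_sub_one_le_of_tail μ (τ Δ) (by linarith) (by positivity) hrξ
      (C := E * c ^ (-β) * a ^ (-β) * Δ ^ (-β)) (by positivity) fun k hk =>
        (htail Δ hΔ k hk).trans <| ENNReal.ofReal_le_ofReal <|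
          natCast_mul_mul_rpow_neg_le hk hβ0.le hc.le hΔ0.le ha hξ0 hE
            (by rw [Real.rpow_natCast]; exact hgrowth k hk) using 2
    ring
  exact ⟨⟨_, hM, hbound⟩, iSup_Ici_lt_top_of_le_one_add_mul_rpow_neg hΔ₀ hβ0.le hM hbound,
    tendsto_one_of_le_one_add_mul_rpow_neg hβ0 (fun Δ => one_le_lintegral_ofReal_pow μ _ hr.le)
      hbound⟩

/-- Let `r > 1`, `β > 2`, `ε ∈ (0, β-2)`, `ξ > 1` with `r ξ^{-β} < 1`, and `w ≥ 0`
with `E[w^β] < ∞`.  If for each `Δ ≥ Δ₀ > 0` a return time `τ_Δ` satisfies the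
tail bound `P(τ_Δ ≥ k+1) ≤ k E[w^β] (cΔ(hξ^k - 1 - c'k)/k)^{-β}` for all `k ≥ 1`
(with `h ∈ (1/ξ, 1]`, `0 < c`, `c' < hξ - 1`), then `E[r^{τ_Δ - 1}] ≤ 1 + M Δ^{-β}`
for a constant `M` independent of `Δ`; in particular the expectations are
uniformly bounded over `Δ ≥ Δ₀` and tend to `1` as `Δ → ∞`. -/
theorem return_time_exponential_moment {Ω : Type*} [MeasurableSpace Ω]
    (μ : Measure Ω) [IsProbabilityMeasure μ]
    (r β ε ξ h c c' Δ₀ : ℝ) (hr : 1 < r) (hβ : 2 < β) (hε : 0 < ε ∧ ε < β - 2)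
    (hξ : 1 < ξ) (hrξ : r * ξ ^ (-β) < 1)
    (hh1 : 1 / ξ < h) (hh2 : h ≤ 1) (hc : 0 < c) (hc' : c' < h * ξ - 1)
    (hΔ₀ : 0 < Δ₀)
    (w : Ω → ℝ) (hwm : Measurable w) (hwnn : ∀ ω, 0 ≤ w ω)
    (hint : Integrable (fun ω => w ω ^ β) μ)
    (τ : ℝ → Ω → ℕ)
    (htail : ∀ Δ, Δ₀ ≤ Δ → ∀ k : ℕ, 1 ≤ k →
      μ {ω | k + 1 ≤ τ Δ ω} ≤ ENNReal.ofReal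
        ((k : ℝ) * (∫ ω, w ω ^ β ∂μ) *
          (c * Δ * (h * ξ ^ (k : ℝ) - 1 - c' * k) / k) ^ (-β))) :
    (∃ M : ℝ, 0 ≤ M ∧ ∀ Δ, Δ₀ ≤ Δ →
      ∫⁻ ω, ENNReal.ofReal (r ^ (τ Δ ω - 1)) ∂μ ≤
        ENNReal.ofReal (1 + M * Δ ^ (-β))) ∧
    (⨆ Δ ∈ Set.Ici Δ₀, ∫⁻ ω, ENNReal.ofReal (r ^ (τ Δ ω - 1)) ∂μ) < ⊤ ∧
    Tendsto (fun Δ : ℝ => ∫⁻ ω, ENNReal.ofReal (r ^ (τ Δ ω - 1)) ∂μ)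
      atTop (nhds 1) :=
  return_time_exponential_moment_general μ r β ξ h c c' Δ₀ hr hβ hξ hrξ hh1 hh2 hc hc' hΔ₀ w hwnn τ
    htail
end
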